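/- For all r, n ∈ ℕ, L_p(p^r · n) = L_p(n). -/

import Mathlib

/-!
Away from multiples of `p`, `λ_p` is the Legendre symbol, a nontrivial character mod `p` for odd
`p`, so its values over any `p` consecutive integers sum to zero; on multiples of `p`,
`λ_p (p k) = λ_p k`. Splitting `[1, p n]` by divisibility by `p` thus gives `L_p (p n) = L_p n`,
and induction on `r` finishes.
-/

open Finset

theorem ZMod.sum_range_natCast {M : Type*} [AddCommMonoid M] (d : ℕ) [NeZero d]
    (g : ZMod d → M) : ∑ j ∈ range d, g j = ∑ x, g x :=
  sum_nbij' (↑) ZMod.val (by simp) (by simp [ZMod.val_lt])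
    (fun _ hj ↦ ZMod.val_cast_of_lt (mem_range.1 hj)) (fun x _ ↦ ZMod.natCast_zmod_val x)
    (fun _ _ ↦ rfl)

theorem ZMod.sum_range_mul_natCast_add {M : Type*} [AddCommMonoid M] (d : ℕ) [NeZero d]
    (g : ZMod d → M) (a n : ℕ) : ∑ m ∈ range (d * n), g ↑(a + m) = n • ∑ x, g x := by
  induction n with
  | zero => simp
  | succ n ih =>
    have hblock : ∑ j ∈ range d, g ↑(a + (d * n + j)) = ∑ x, g x := by
      simp only [Nat.cast_add, Nat.cast_mul, ZMod.natCast_self, zero_mul, zero_add]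
      rw [ZMod.sum_range_natCast d (fun x ↦ g (a + x))]
      exact Equiv.sum_comp (Equiv.addLeft (a : ZMod d)) g
    rw [Nat.mul_succ, sum_range_add, ih, hblock, succ_nsmul]

theorem legendreSym_sum_Icc_mul_eq_zero (p : ℕ) [Fact p.Prime] (hodd : p ≠ 2) (n : ℕ) :
    ∑ m ∈ Icc 1 (p * n), legendreSym p m = 0 := by
  rw [← Ico_add_one_right_eq_Icc, sum_Ico_eq_sum_range, Nat.add_sub_cancel]
  simp only [legendreSym, Int.cast_natCast]
  rw [ZMod.sum_range_mul_natCast_add, quadraticChar_sum_zero (by rwa [ZMod.ringChar_zmod_n]),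
    smul_zero]

theorem Nat.Icc_filter_dvd_mul_eq_image {d : ℕ} (hd : 0 < d) (n : ℕ) :
    {m ∈ Icc 1 (d * n) | d ∣ m} = (Icc 1 n).image (d * ·) := by
  ext m
  simp only [mem_filter, mem_Icc, mem_image]
  constructor
  · rintro ⟨⟨h1, h2⟩, k, rfl⟩
    exact ⟨k, ⟨Nat.pos_of_mul_pos_left h1, Nat.le_of_mul_le_mul_left h2 hd⟩, rfl⟩
  · rintro ⟨k, ⟨h1, h2⟩, rfl⟩
    exact ⟨⟨Nat.mul_pos hd h1, Nat.mul_le_mul_left d h2⟩, dvd_mul_right d k⟩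

section CompletelyMultiplicative

variable {p : ℕ} [hp : Fact p.Prime] {f : ℕ → ℤ}

theorem eq_legendreSym_of_not_dvd (hf1 : f 1 = 1) (hfmul : ∀ m n, f (m * n) = f m * f n)
    (hfq : ∀ q : ℕ, q.Prime → q ≠ p → f q = legendreSym p q) {m : ℕ} (hm : ¬ p ∣ m) :
    f m = legendreSym p m := by
  induction m using Nat.recOnMul with
  | zero => exact absurd (dvd_zero p) hm
  | one => rw [hf1, Nat.cast_one, legendreSym.at_one]
  | prime q hq => exact hfq q hq (by rintro rfl; exact hm dvd_rfl)
  | mul a b ha hb =>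
    rw [hfmul, ha (fun h ↦ hm (h.mul_right b)), hb (fun h ↦ hm (h.mul_left a)), Nat.cast_mul,
      legendreSym.mul]

theorem sum_Icc_mul_filter_not_dvd (hodd : p ≠ 2) (hf1 : f 1 = 1)
    (hfmul : ∀ m n, f (m * n) = f m * f n)
    (hfq : ∀ q : ℕ, q.Prime → q ≠ p → f q = legendreSym p q) (n : ℕ) :
    ∑ m ∈ Icc 1 (p * n) with ¬ p ∣ m, f m = 0 :=
  calc ∑ m ∈ Icc 1 (p * n) with ¬ p ∣ m, f m
      = ∑ m ∈ Icc 1 (p * n) with ¬ p ∣ m, legendreSym p m :=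
        sum_congr rfl fun m hm ↦ eq_legendreSym_of_not_dvd hf1 hfmul hfq (mem_filter.1 hm).2
    _ = ∑ m ∈ Icc 1 (p * n), legendreSym p m :=
        sum_filter_of_ne fun m _ hne hdvd ↦ hne <| (legendreSym.eq_zero_iff p _).2 <| by
          exact_mod_cast (ZMod.natCast_eq_zero_iff m p).2 hdvd
    _ = 0 := legendreSym_sum_Icc_mul_eq_zero p hodd n

theorem sum_Icc_mul_filter_dvd (hfmul : ∀ m n, f (m * n) = f m * f n) (hfp : f p = 1)
    (n : ℕ) : ∑ m ∈ Icc 1 (p * n) with p ∣ m, f m = ∑ m ∈ Icc 1 n, f m := by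
  rw [Nat.Icc_filter_dvd_mul_eq_image hp.out.pos,
    sum_image fun _ _ _ _ h ↦ Nat.eq_of_mul_eq_mul_left hp.out.pos h]
  simp only [hfmul, hfp, one_mul]

theorem sum_Icc_prime_mul (hodd : p ≠ 2) (hf1 : f 1 = 1)
    (hfmul : ∀ m n, f (m * n) = f m * f n) (hfp : f p = 1)
    (hfq : ∀ q : ℕ, q.Prime → q ≠ p → f q = legendreSym p q) (n : ℕ) :
    ∑ m ∈ Icc 1 (p * n), f m = ∑ m ∈ Icc 1 n, f m := by
  rw [← sum_filter_add_sum_filter_not _ (p ∣ ·), sum_Icc_mul_filter_dvd hfmul hfp,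
    sum_Icc_mul_filter_not_dvd hodd hf1 hfmul hfq, add_zero]

end CompletelyMultiplicative

/-- For all `r, n ∈ ℕ`, `L_p(p^r · n) = L_p(n)`. -/
theorem stmt_18 (p : ℕ) [Fact p.Prime] (hodd : p ≠ 2)
    (f : ℕ → ℤ) (hf1 : f 1 = 1) (hfmul : ∀ m n, f (m * n) = f m * f n)
    (hfp : f p = 1) (hfq : ∀ q : ℕ, q.Prime → q ≠ p → f q = legendreSym p q) :
    ∀ r n : ℕ, ∑ m ∈ Finset.Icc 1 (p ^ r * n), f m = ∑ m ∈ Finset.Icc 1 n, f m := by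
  intro r
  induction r with
  | zero => simp
  | succ r ih =>
    intro n
    rw [pow_succ', mul_assoc, sum_Icc_prime_mul hodd hf1 hfmul hfp hfq, ih]
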